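/- For the penalized objective of Eq. (5) with D = KL: if for some λ the divergence term D(μˡ(λ), marg(μᵏ(λ))) = 0, where μˡ(λ) and μᵏ(λ) are the reparameterized distributions, then (μᵏ(λ), μˡ(λ)) is feasible and optimal for the primal program of Eq. (3). -/

import Mathlib

/-!
For `λ` fixed, `μˡ(λ)` and `μᵏ(λ)` are the exponential tiltings of `τˡ` by `λ` and of `τᵏ` by
`-λ ∘ cls`, with normalizers `Zˡ` and `Zᵏ`. For every feasible pair `(νᵏ, νˡ)`,
`KL(νᵏ‖τᵏ) + KL(νˡ‖τˡ) = KL(νᵏ‖μᵏ) + KL(νˡ‖μˡ) - log Zᵏ - log Zˡ`,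
because the linear terms `⟨νᵏ, -λ ∘ cls⟩ + ⟨νˡ, λ⟩` cancel under marginal consistency.
By Gibbs' inequality the right-hand side is at least `-log Zᵏ - log Zˡ`, which is attained at
`(μᵏ, μˡ)` as soon as that pair is feasible; and `KL(μˡ‖marg μᵏ) = 0` forces `μˡ = marg μᵏ`.
-/

open Finset

noncomputable def KL {α : Type*} [Fintype α] (μ τ : α → ℝ) : ℝ :=
  ∑ i, μ i * Real.log (μ i / τ i)

open Real InformationTheory

section Gibbs

variable {α : Type*} [Fintype α]

theorem mul_log_div_sub_sub_eq_mul_klFun (x : ℝ) {y : ℝ} (hy : 0 < y) :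
    x * log (x / y) - (x - y) = y * klFun (x / y) := by
  rw [klFun_apply]
  field_simp
  ring

theorem KL_eq_sum_mul_klFun (ν : α → ℝ) {μ : α → ℝ} (hμ : ∀ a, 0 < μ a)
    (hsum : ∑ a, ν a = ∑ a, μ a) : KL ν μ = ∑ a, μ a * klFun (ν a / μ a) := by
  simp_rw [← mul_log_div_sub_sub_eq_mul_klFun _ (hμ _)]
  rw [sum_sub_distrib, sum_sub_distrib, hsum, sub_self, sub_zero]
  rfl

theorem KL_nonneg {ν μ : α → ℝ} (hν : ∀ a, 0 ≤ ν a) (hμ : ∀ a, 0 < μ a)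
    (hsum : ∑ a, ν a = ∑ a, μ a) : 0 ≤ KL ν μ := by
  rw [KL_eq_sum_mul_klFun ν hμ hsum]
  exact sum_nonneg fun a _ => mul_nonneg (hμ a).le (klFun_nonneg (div_nonneg (hν a) (hμ a).le))

theorem eq_of_KL_eq_zero {ν μ : α → ℝ} (hν : ∀ a, 0 ≤ ν a) (hμ : ∀ a, 0 < μ a)
    (hsum : ∑ a, ν a = ∑ a, μ a) (h : KL ν μ = 0) : ν = μ := by
  rw [KL_eq_sum_mul_klFun ν hμ hsum, sum_eq_zero_iff_of_nonneg fun a _ =>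
    mul_nonneg (hμ a).le (klFun_nonneg (div_nonneg (hν a) (hμ a).le))] at h
  funext a
  have hklFun : klFun (ν a / μ a) = 0 :=
    (mul_eq_zero.mp (h a (mem_univ a))).resolve_left (hμ a).ne'
  rw [klFun_eq_zero_iff (div_nonneg (hν a) (hμ a).le)] at hklFun
  exact (div_eq_one_iff_eq (hμ a).ne').mp hklFun

theorem KL_self (μ : α → ℝ) : KL μ μ = 0 :=
  sum_eq_zero fun a _ => by by_cases h : μ a = 0 <;> simp [h]

end Gibbs

section Tilt

variable {α : Type*} [Fintype α]

noncomputable def tilt (τ c : α → ℝ) (a : α) : ℝ :=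
  τ a * exp (c a) / ∑ b, τ b * exp (c b)

variable [Nonempty α] {τ : α → ℝ} (c : α → ℝ)

theorem tilt_normalizer_pos (hτ : ∀ a, 0 < τ a) : 0 < ∑ b, τ b * exp (c b) :=
  sum_pos (fun b _ => mul_pos (hτ b) (exp_pos _)) univ_nonempty

theorem tilt_pos (hτ : ∀ a, 0 < τ a) (a : α) : 0 < tilt τ c a :=
  div_pos (mul_pos (hτ a) (exp_pos _)) (tilt_normalizer_pos c hτ)

theorem sum_tilt (hτ : ∀ a, 0 < τ a) : ∑ a, tilt τ c a = 1 := by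
  simp_rw [tilt, ← sum_div]
  exact div_self (tilt_normalizer_pos c hτ).ne'

theorem KL_eq_KL_tilt_add (hτ : ∀ a, 0 < τ a) (ν : α → ℝ) :
    KL ν τ = KL ν (tilt τ c) + ∑ a, ν a * c a - (∑ a, ν a) * log (∑ b, τ b * exp (c b)) := by
  rw [KL, KL, sum_mul, ← sum_add_distrib, ← sum_sub_distrib]
  refine sum_congr rfl fun a _ => ?_
  by_cases hν : ν a = 0
  · simp [hν]
  have hlog_tilt : log (tilt τ c a) = log (τ a) + c a - log (∑ b, τ b * exp (c b)) := by
    rw [tilt, log_div (mul_pos (hτ a) (exp_pos _)).ne' (tilt_normalizer_pos c hτ).ne',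
      log_mul (hτ a).ne' (exp_pos _).ne', log_exp]
  rw [log_div hν (hτ a).ne', log_div hν (tilt_pos c hτ a).ne', hlog_tilt]
  ring

end Tilt

theorem sum_mul_comp_eq_sum_fiber_mul {ι κ R : Type*} [Fintype ι] [Fintype κ] [DecidableEq κ]
    [CommSemiring R] (g : ι → κ) (ν : ι → R) (f : κ → R) :
    ∑ i, ν i * f (g i) = ∑ k, (∑ i ∈ univ.filter (fun i => g i = k), ν i) * f k := by
  rw [← sum_fiberwise univ g]
  simp_rw [sum_mul]
  exact sum_congr rfl fun k _ => sum_congr rfl fun i hi => by rw [(mem_filter.mp hi).2]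

section Marginal

variable {I J : Type*} [Fintype I] [Fintype J] [DecidableEq I] [Nonempty I] [Nonempty J]
  (cls : J → I) {τk : J → ℝ} {τl : I → ℝ}

theorem KL_add_KL_eq_of_marginal (hτk : ∀ j, 0 < τk j) (hτl : ∀ i, 0 < τl i) (lam : I → ℝ)
    {νk : J → ℝ} {νl : I → ℝ} (hνk1 : ∑ j, νk j = 1) (hνl1 : ∑ i, νl i = 1)
    (hmarg : ∀ i, νl i = ∑ j ∈ univ.filter (fun j => cls j = i), νk j) :
    KL νk τk + KL νl τl =
      KL νk (tilt τk fun j => -lam (cls j)) + KL νl (tilt τl lam)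
        - log (∑ j, τk j * exp (-lam (cls j))) - log (∑ i, τl i * exp (lam i)) := by
  have hlinear : ∑ j, νk j * -lam (cls j) + ∑ i, νl i * lam i = 0 := by
    rw [sum_mul_comp_eq_sum_fiber_mul cls νk fun i => -lam i]
    simp_rw [← hmarg, mul_neg, sum_neg_distrib, neg_add_cancel]
  rw [KL_eq_KL_tilt_add _ hτk, KL_eq_KL_tilt_add _ hτl, hνk1, hνl1]
  linear_combination hlinear

theorem KL_tilt_add_KL_tilt_le (hτk : ∀ j, 0 < τk j) (hτl : ∀ i, 0 < τl i) (lam : I → ℝ)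
    (hfeas : ∀ i, tilt τl lam i =
      ∑ j ∈ univ.filter (fun j => cls j = i), tilt τk (fun j => -lam (cls j)) j)
    {νk : J → ℝ} {νl : I → ℝ} (hνk : ∀ j, 0 ≤ νk j) (hνk1 : ∑ j, νk j = 1)
    (hνl : ∀ i, 0 ≤ νl i) (hνl1 : ∑ i, νl i = 1)
    (hmarg : ∀ i, νl i = ∑ j ∈ univ.filter (fun j => cls j = i), νk j) :
    KL (tilt τk fun j => -lam (cls j)) τk + KL (tilt τl lam) τl ≤ KL νk τk + KL νl τl := by
  rw [KL_add_KL_eq_of_marginal cls hτk hτl lam hνk1 hνl1 hmarg,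
    KL_add_KL_eq_of_marginal cls hτk hτl lam (sum_tilt _ hτk) (sum_tilt _ hτl) hfeas,
    KL_self, KL_self]
  have hk := KL_nonneg hνk (tilt_pos (fun j => -lam (cls j)) hτk) (by rw [hνk1, sum_tilt _ hτk])
  have hl := KL_nonneg hνl (tilt_pos lam hτl) (by rw [hνl1, sum_tilt _ hτl])
  linarith

end Marginal

theorem stmt19_general {I J : Type*} [Fintype I] [Fintype J] [DecidableEq I]
    (cls : J → I) (hsurj : Function.Surjective cls)
    (τk : J → ℝ) (τl : I → ℝ)
    (hτk : ∀ j, 0 < τk j) (hτl : ∀ i, 0 < τl i)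
    (hτl1 : ∑ i, τl i = 1)
    (lam : I → ℝ)
    (μl : I → ℝ)
    (hμl : ∀ i, μl i = τl i * Real.exp (lam i) / ∑ s, τl s * Real.exp (lam s))
    (μk : J → ℝ)
    (hμk : ∀ j, μk j = τk j * Real.exp (-lam (cls j)) /
      ∑ t, ∑ s ∈ univ.filter (fun s => cls s = t), τk s * Real.exp (-lam t))
    (marg : I → ℝ)
    (hmarg : ∀ i, marg i = ∑ j ∈ univ.filter (fun j => cls j = i), μk j)
    (hzero : KL μl marg = 0) :
    -- (μk, μl) is feasible and optimal for the primal program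
    ((∀ j, 0 ≤ μk j) ∧ (∑ j, μk j = 1) ∧ (∀ i, 0 ≤ μl i) ∧ (∑ i, μl i = 1) ∧
      (∀ i, μl i = ∑ j ∈ univ.filter (fun j => cls j = i), μk j)) ∧
    ∀ νk : J → ℝ, ∀ νl : I → ℝ,
      (∀ j, 0 ≤ νk j) → (∑ j, νk j = 1) → (∀ i, 0 ≤ νl i) → (∑ i, νl i = 1) →
      (∀ i, νl i = ∑ j ∈ univ.filter (fun j => cls j = i), νk j) →
      KL μk τk + KL μl τl ≤ KL νk τk + KL νl τl := by
  have : Nonempty I := univ_nonempty_iff.mp (nonempty_of_sum_ne_zero (hτl1 ▸ one_ne_zero))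
  have : Nonempty J := (hsurj (Classical.arbitrary I)).nonempty
  obtain rfl : μl = tilt τl lam := funext hμl
  obtain rfl : μk = tilt τk (fun j => -lam (cls j)) := funext fun j => by
    simp_rw [hμk, ← sum_mul, ← sum_mul_comp_eq_sum_fiber_mul, tilt]
  have hmarg_pos (i : I) : 0 < marg i := by
    obtain ⟨j, rfl⟩ := hsurj i
    rw [hmarg]
    exact sum_pos (fun j _ => tilt_pos _ hτk j) ⟨j, by simp⟩
  have hsum_marg : ∑ i, marg i = 1 := by
    simp_rw [hmarg, sum_fiberwise, sum_tilt _ hτk]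
  have htilt_eq_marg : tilt τl lam = marg := eq_of_KL_eq_zero (fun i => (tilt_pos _ hτl i).le)
    hmarg_pos (by rw [hsum_marg, sum_tilt _ hτl]) hzero
  have hfeas (i : I) := (congrFun htilt_eq_marg i).trans (hmarg i)
  exact ⟨⟨fun j => (tilt_pos _ hτk j).le, sum_tilt _ hτk, fun i => (tilt_pos _ hτl i).le,
    sum_tilt _ hτl, hfeas⟩, fun νk νl => KL_tilt_add_KL_tilt_le cls hτk hτl lam hfeas⟩

theorem stmt19 {I J : Type*} [Fintype I] [Fintype J] [DecidableEq I]
    (cls : J → I) (hsurj : Function.Surjective cls)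
    (τk : J → ℝ) (τl : I → ℝ)
    (hτk : ∀ j, 0 < τk j) (hτl : ∀ i, 0 < τl i)
    (hτk1 : ∑ j, τk j = 1) (hτl1 : ∑ i, τl i = 1)
    (lam : I → ℝ)
    (μl : I → ℝ)
    (hμl : ∀ i, μl i = τl i * Real.exp (lam i) / ∑ s, τl s * Real.exp (lam s))
    (μk : J → ℝ)
    (hμk : ∀ j, μk j = τk j * Real.exp (-lam (cls j)) /
      ∑ t, ∑ s ∈ univ.filter (fun s => cls s = t), τk s * Real.exp (-lam t))
    (marg : I → ℝ)
    (hmarg : ∀ i, marg i = ∑ j ∈ univ.filter (fun j => cls j = i), μk j)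
    (hzero : KL μl marg = 0) :
    -- (μk, μl) is feasible and optimal for the primal program
    ((∀ j, 0 ≤ μk j) ∧ (∑ j, μk j = 1) ∧ (∀ i, 0 ≤ μl i) ∧ (∑ i, μl i = 1) ∧
      (∀ i, μl i = ∑ j ∈ univ.filter (fun j => cls j = i), μk j)) ∧
    ∀ νk : J → ℝ, ∀ νl : I → ℝ,
      (∀ j, 0 ≤ νk j) → (∑ j, νk j = 1) → (∀ i, 0 ≤ νl i) → (∑ i, νl i = 1) →
      (∀ i, νl i = ∑ j ∈ univ.filter (fun j => cls j = i), νk j) →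
      KL μk τk + KL μl τl ≤ KL νk τk + KL νl τl :=
  stmt19_general cls hsurj τk τl hτk hτl hτl1 lam μl hμl μk hμk marg hmarg hzero
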